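/- Let (G,*) be a groupoid satisfying the identities x*(y*z) = x*(z*y) and w*(x*(y*z)) = w*((x*y)*z). Then any two full linear terms over x_1,…,x_n inducing the same rooted ordered set partition (same leftmost variable and the same ordered sequence of variable-index sets of the subterms in the leftmost decomposition) induce the same n-ary operation on G. Consequently the ac-spectrum satisfies s^ac_n(*) ≤ n·B'_{n-1}, where B'_{n-1} is the ordered Bell (Fubini) number, and the associative spectrum satisfies s_n(*) ≤ 2^{n-2} for n ≥ 2. -/

import Mathlib

/-- Terms (fully parenthesized products) over variables `x_1,…,x_n`. -/
inductive Term (n : ℕ) : Type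
  | var : Fin n → Term n
  | mul : Term n → Term n → Term n

namespace Term

variable {n : ℕ} {G : Type*}

/-- Evaluation of a term in a groupoid `(G, op)` under an assignment `h`. -/
def eval (op : G → G → G) (h : Fin n → G) : Term n → G
  | var i => h i
  | mul s t => op (eval op h s) (eval op h t)

/-- The list of variable indices at the leaves, from left to right. -/
def leaves : Term n → List (Fin n)
  | var i => [i]
  | mul s t => leaves s ++ leaves t

/-- The leftmost variable of a term. -/
def leftVar : Term n → Fin n
  | var i => i
  | mul s _ => leftVar s

/-- The factors `t_1, …, t_m` of the leftmost decomposition `t = [t_0, t_1, …, t_m]`. -/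
def lmFactors : Term n → List (Term n)
  | var _ => []
  | mul s t => lmFactors s ++ [t]

/-- The left depth of the leftmost leaf of a term. -/
def leftDepth : Term n → ℕ
  | var _ => 0
  | mul s _ => leftDepth s + 1

/-- A bracketing of the word `x_1 x_2 ⋯ x_n`. -/
def IsBracketing (t : Term n) : Prop := t.leaves = List.finRange n

/-- A full linear term over `x_1, …, x_n`: each variable occurs exactly once. -/
def IsLinear (t : Term n) : Prop := t.leaves.Perm (List.finRange n)

end Term

/-- Leftmost bracketing `[t_0, t_1, …, t_m]`. -/
def lmBr {n : ℕ} (t0 : Term n) (l : List (Term n)) : Term n := l.foldl Term.mul t0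

/-- Leftmost bracketing of variables `[x_i, x_{j_1}, …, x_{j_k}]`. -/
def lBr {n : ℕ} (i : Fin n) (l : List (Fin n)) : Term n :=
  l.foldl (fun s j => Term.mul s (Term.var j)) (Term.var i)

/-- Rightmost bracketing of variables `⟨x_i, x_{j_1}, …, x_{j_k}⟩`. -/
def rmBr {n : ℕ} (i : Fin n) : List (Fin n) → Term n
  | [] => Term.var i
  | j :: l => Term.mul (Term.var i) (rmBr j l)

/-- `n`-th term of the associative spectrum: the number of distinct `n`-ary operations
induced by bracketings of `x_1 ⋯ x_n`. -/
noncomputable def assocSpec {G : Type*} (op : G → G → G) (n : ℕ) : ℕ :=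
  Set.ncard {f : (Fin n → G) → G | ∃ t : Term n, t.IsBracketing ∧ f = fun h => t.eval op h}

/-- `n`-th term of the ac-spectrum: the number of distinct `n`-ary operations
induced by full linear terms over `x_1, …, x_n`. -/
noncomputable def acSpec {G : Type*} (op : G → G → G) (n : ℕ) : ℕ :=
  Set.ncard {f : (Fin n → G) → G | ∃ t : Term n, t.IsLinear ∧ f = fun h => t.eval op h}
/-- Bell numbers. -/
def bell : ℕ → ℕ
  | 0 => 1
  | n + 1 => ∑ k : Fin (n + 1), Nat.choose n k * bell k
  decreasing_by exact k.isLt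

/-- Ordered Bell (Fubini) numbers. -/
def fubini : ℕ → ℕ
  | 0 => 1
  | n + 1 => ∑ k : Fin (n + 1), Nat.choose (n + 1) k * fubini k
  decreasing_by exact k.isLt

/-- Number of partitions of an `n`-set into blocks of size at most 2. -/
def bell2 : ℕ → ℕ
  | 0 => 1
  | 1 => 1
  | n + 2 => bell2 (n + 1) + (n + 1) * bell2 n

/-- The set of egg-pairs of (maximal nests of) a term. -/
def Term.eggs {n : ℕ} : Term n → Finset (Finset (Fin n))
  | .var _ => ∅
  | .mul (.var i) (.var j) => {({i, j} : Finset (Fin n))}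
  | .mul s t => Term.eggs s ∪ Term.eggs t


namespace SpecAux

variable {G : Type*} {n : ℕ}

section Groupoid
variable (op : G → G → G)
variable (h1 : ∀ x y z : G, op x (op y z) = op x (op z y))
variable (h2 : ∀ w x y z : G, op w (op x (op y z)) = op w (op (op x y) z))
set_option linter.unusedSectionVars false
include h1 h2

lemma cong_foldr {X Y : G} (hXY : ∀ w, op w X = op w Y) :
    ∀ (l : List G) (w : G), op w (l.foldr op X) = op w (l.foldr op Y)
  | [], w => hXY w
  | a :: l, w => congrArg (op w) (cong_foldr hXY l a)

lemma perm_foldr {l1 l2 : List G} (hp : l1.Perm l2) :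
    ∀ (b w : G), op w (l1.foldr op b) = op w (l2.foldr op b) := by
  induction hp with
  | nil => intro b w; rfl
  | cons x _ ih => intro b w; exact congrArg (op w) (ih b x)
  | swap x y l =>
      intro b w
      simp only [List.foldr_cons]
      set A := l.foldr op b with hA
      calc op w (op y (op x A)) = op w (op (op y x) A) := h2 w y x A
        _ = op w (op A (op y x)) := h1 w (op y x) A
        _ = op w (op A (op x y)) := congrArg (op w) (h1 A y x)
        _ = op w (op (op x y) A) := (h1 w (op x y) A).symm
        _ = op w (op x (op y A)) := (h2 w x y A).symm
  | trans _ _ ih1 ih2 => intro b w; exact (ih1 b w).trans (ih2 b w)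

lemma swap_last (l : List G) (b c w : G) :
    op w ((l ++ [c]).foldr op b) = op w ((l ++ [b]).foldr op c) := by
  rw [List.foldr_append, List.foldr_append]
  exact cong_foldr op h1 h2 (fun w' => h1 w' c b) l w

lemma head_perm_foldr {b1 b2 : G} {l1 l2 : List G}
    (hp : (b1 :: l1).Perm (b2 :: l2)) (w : G) :
    op w (l1.foldr op b1) = op w (l2.foldr op b2) := by
  rcases List.mem_cons.mp (hp.symm.subset (List.mem_cons_self : b2 ∈ b2 :: l2)) with hb | hb
  · subst hb
    exact perm_foldr op h1 h2 hp.cons_inv _ w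
  · obtain ⟨p, q, rfl⟩ := List.append_of_mem hb
    have e0 : (p ++ b2 :: q).Perm (b2 :: (p ++ q)) := List.perm_middle
    have perm1 : (p ++ b2 :: q).Perm ((p ++ q) ++ [b2]) :=
      e0.trans (List.perm_append_singleton b2 (p ++ q)).symm
    have e1 : (b1 :: (p ++ b2 :: q)).Perm (b2 :: b1 :: (p ++ q)) :=
      (e0.cons b1).trans (List.Perm.swap b2 b1 (p ++ q))
    have e2 : l2.Perm (b1 :: (p ++ q)) := (hp.symm.trans e1).cons_inv
    calc op w ((p ++ b2 :: q).foldr op b1)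
        = op w (((p ++ q) ++ [b2]).foldr op b1) := perm_foldr op h1 h2 perm1 b1 w
      _ = op w (((p ++ q) ++ [b1]).foldr op b2) := swap_last op h1 h2 (p ++ q) b1 b2 w
      _ = op w (l2.foldr op b2) :=
          perm_foldr op h1 h2 ((List.perm_append_singleton b1 (p ++ q)).trans e2.symm) b2 w

variable (h : Fin n → G)

lemma left_expand :
    ∀ (s : Term n) (b w : G),
      op w (op (s.eval op h) b) = op w ((s.leaves.map h).foldr op b)
  | .var i, b, w => rfl
  | .mul s1 s2, b, w => by
      show op w (op (op (s1.eval op h) (s2.eval op h)) b) = _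
      calc op w (op (op (s1.eval op h) (s2.eval op h)) b)
          = op w (op (s1.eval op h) (op (s2.eval op h) b)) :=
            (h2 w (s1.eval op h) (s2.eval op h) b).symm
        _ = op w ((s1.leaves.map h).foldr op (op (s2.eval op h) b)) :=
            left_expand s1 (op (s2.eval op h) b) w
        _ = op w ((s1.leaves.map h).foldr op ((s2.leaves.map h).foldr op b)) :=
            cong_foldr op h1 h2 (fun w' => left_expand s2 b w') _ w
        _ = op w (((s1.mul s2).leaves.map h).foldr op b) := by
            show _ = op w ((((s1.leaves ++ s2.leaves)).map h).foldr op b)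
            rw [List.map_append, List.foldr_append]

lemma eval_normal :
    ∀ t : Term n, ∃ (b : G) (L : List G), (b :: L).Perm (t.leaves.map h) ∧
      ∀ w, op w (t.eval op h) = op w (L.foldr op b)
  | .var i => ⟨h i, [], by simp [Term.leaves], fun _ => rfl⟩
  | .mul s u => by
      obtain ⟨b, L, hp, he⟩ := eval_normal u
      refine ⟨b, s.leaves.map h ++ L, ?_, ?_⟩
      · have : (b :: (s.leaves.map h ++ L)).Perm (s.leaves.map h ++ (b :: L)) :=
          List.perm_middle.symm
        refine this.trans ?_
        show _root_.List.Perm _ (((s.leaves ++ u.leaves)).map h)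
        rw [List.map_append]
        exact hp.append_left (s.leaves.map h)
      · intro w
        calc op w ((s.mul u).eval op h)
            = op w (op (s.eval op h) (u.eval op h)) := rfl
          _ = op w (op (s.eval op h) (L.foldr op b)) := congrArg (op w) (he (s.eval op h))
          _ = op w ((s.leaves.map h).foldr op (L.foldr op b)) :=
              left_expand op h1 h2 h s (L.foldr op b) w
          _ = op w ((s.leaves.map h ++ L).foldr op b) := by rw [List.foldr_append]

lemma eval_perm {u v : Term n} (hp : u.leaves.Perm v.leaves) (w : G) :
    op w (u.eval op h) = op w (v.eval op h) := by
  obtain ⟨bu, Lu, hpu, heu⟩ := eval_normal op h1 h2 h u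
  obtain ⟨bv, Lv, hpv, hev⟩ := eval_normal op h1 h2 h v
  rw [heu w, hev w]
  exact head_perm_foldr op h1 h2 (hpu.trans ((hp.map h).trans hpv.symm)) w

end Groupoid
end SpecAux


namespace SpecAux
variable {G : Type*} {n : ℕ}

lemma leaves_ne_nil : ∀ t : Term n, t.leaves ≠ []
  | .var i => by simp [Term.leaves]
  | .mul s u => by simp [Term.leaves, List.append_eq_nil_iff, leaves_ne_nil s]

lemma leaves_decomp : ∀ t : Term n, t.leaves = t.leftVar :: (t.lmFactors.map Term.leaves).flatten
  | .var i => rfl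
  | .mul s u => by
      show s.leaves ++ u.leaves = s.leftVar :: ((s.lmFactors ++ [u]).map Term.leaves).flatten
      rw [leaves_decomp s, List.map_append, List.flatten_append]
      simp

lemma eval_fold (op : G → G → G) (h : Fin n → G) :
    ∀ t : Term n, t.eval op h = t.lmFactors.foldl (fun a u => op a (u.eval op h)) (h t.leftVar)
  | .var i => rfl
  | .mul s u => by
      show op (s.eval op h) (u.eval op h)
          = ((s.lmFactors ++ [u]).foldl (fun a u => op a (u.eval op h)) (h s.leftVar))
      rw [List.foldl_append, ← eval_fold op h s]
      rfl

lemma forall₂_of_map_eq {α β : Type*} {f : α → β} :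
    ∀ {l1 l2 : List α}, l1.map f = l2.map f → List.Forall₂ (fun a b => f a = f b) l1 l2
  | [], [], _ => List.Forall₂.nil
  | [], _ :: _, h => by simp at h
  | _ :: _, [], h => by simp at h
  | a :: l1, b :: l2, h => by
      simp only [List.map_cons, List.cons.injEq] at h
      exact List.Forall₂.cons h.1 (forall₂_of_map_eq h.2)

lemma forall₂_perm [DecidableEq (Fin n)] :
    ∀ {l1 l2 : List (Term n)},
    List.Forall₂ (fun u v => u.leaves.toFinset = v.leaves.toFinset) l1 l2 →
    (∀ u ∈ l1, u.leaves.Nodup) → (∀ v ∈ l2, v.leaves.Nodup) →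
    List.Forall₂ (fun u v => u.leaves.Perm v.leaves) l1 l2
  | [], [], _, _, _ => .nil
  | [], _ :: _, h, _, _ => by cases h
  | _ :: _, [], h, _, _ => by cases h
  | a :: l1, b :: l2, h, hn1, hn2 => by
      rcases h with _ | ⟨hab, hrest⟩
      exact .cons
        (List.perm_of_nodup_nodup_toFinset_eq (hn1 a (by simp)) (hn2 b (by simp)) hab)
        (forall₂_perm hrest (fun u hu => hn1 u (by simp [hu])) (fun v hv => hn2 v (by simp [hv])))

lemma factors_nodup {t : Term n} (ht : t.IsLinear) : ∀ u ∈ t.lmFactors, u.leaves.Nodup := by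
  have hnd : t.leaves.Nodup := ht.nodup_iff.mpr (List.nodup_finRange n)
  rw [leaves_decomp t] at hnd
  have hfl := (List.nodup_cons.mp hnd).2
  intro u hu
  exact (List.nodup_flatten.mp hfl).1 _ (List.mem_map_of_mem (f := Term.leaves) hu)

section Main
variable (op : G → G → G)
variable (h1 : ∀ x y z : G, op x (op y z) = op x (op z y))
variable (h2 : ∀ w x y z : G, op w (op x (op y z)) = op w (op (op x y) z))
include h1 h2

lemma foldl_congr (h : Fin n → G) {l1 l2 : List (Term n)}
    (hf : List.Forall₂ (fun u v => u.leaves.Perm v.leaves) l1 l2) :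
    ∀ a, l1.foldl (fun a u => op a (u.eval op h)) a
        = l2.foldl (fun a u => op a (u.eval op h)) a := by
  induction hf with
  | nil => intro a; rfl
  | @cons u v l1 l2 huv _ ih =>
      intro a
      simp only [List.foldl_cons]
      rw [eval_perm op h1 h2 h huv a]
      exact ih _

lemma main_part1 (s t : Term n) (hs : s.IsLinear) (ht : t.IsLinear)
    (hlv : s.leftVar = t.leftVar)
    (hmap : (s.lmFactors.map fun u => u.leaves.toFinset)
        = (t.lmFactors.map fun u => u.leaves.toFinset))
    (h : Fin n → G) : s.eval op h = t.eval op h := by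
  classical
  have hfp : List.Forall₂ (fun u v => u.leaves.Perm v.leaves) s.lmFactors t.lmFactors :=
    forall₂_perm (forall₂_of_map_eq hmap) (factors_nodup hs) (factors_nodup ht)
  rw [eval_fold op h s, eval_fold op h t, hlv]
  exact foldl_congr op h1 h2 h hfp _

end Main
end SpecAux


namespace SpecAux
variable {n : ℕ}

lemma ncard_biUnion_le {α β : Type*} (F : Finset β) (T : β → Set α) (g : β → ℕ)
    (hT : ∀ b ∈ F, (T b).Finite) (hg : ∀ b ∈ F, (T b).ncard ≤ g b) :
    (⋃ b ∈ F, T b).ncard ≤ ∑ b ∈ F, g b := by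
  classical
  revert hT hg
  induction F using Finset.induction_on with
  | empty => simp
  | @insert a F ha ih =>
      intro hT hg
      rw [Finset.sum_insert ha]
      have e : (⋃ b ∈ (insert a F : Finset β), T b) = T a ∪ ⋃ b ∈ F, T b := by
        simp [Set.biUnion_insert]
      rw [e]
      exact le_trans (Set.ncard_union_le _ _)
        (Nat.add_le_add (hg a (Finset.mem_insert_self a F))
          (ih (fun b hb => hT b (Finset.mem_insert_of_mem hb))
            (fun b hb => hg b (Finset.mem_insert_of_mem hb))))

lemma mem_foldr_union {l : List (Finset (Fin n))} {x : Fin n} :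
    x ∈ l.foldr (· ∪ ·) ∅ ↔ ∃ b ∈ l, x ∈ b := by
  induction l with
  | nil => simp
  | cons a l ih => simp [List.foldr_cons, Finset.mem_union, ih]

def OPSet (n : ℕ) (s : Finset (Fin n)) : Set (List (Finset (Fin n))) :=
  {l | (∀ b ∈ l, b.Nonempty) ∧ l.Pairwise Disjoint ∧ l.foldr (· ∪ ·) ∅ = s}

lemma OPSet_zero : OPSet n ∅ = {([] : List (Finset (Fin n)))} := by
  ext l
  constructor
  · rintro ⟨hne, -, hun⟩
    cases l with
    | nil => rfl
    | cons b l =>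
        exfalso
        obtain ⟨x, hx⟩ := hne b List.mem_cons_self
        have hm : x ∈ (b :: l).foldr (· ∪ ·) ∅ :=
          mem_foldr_union.mpr ⟨b, List.mem_cons_self, hx⟩
        rw [hun] at hm
        exact absurd hm (Finset.notMem_empty x)
  · rintro rfl
    exact ⟨by simp, List.Pairwise.nil, rfl⟩

lemma powerset_sum (s : Finset (Fin n)) (m : ℕ) (hs : s.card = m) (hm : 1 ≤ m) :
    ∑ B ∈ s.powerset.erase ∅, fubini ((s \ B).card) = fubini m := by
  classical
  have h0 : (∅ : Finset (Fin n)) ∈ s.powerset := Finset.empty_mem_powerset s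
  have hsplit := Finset.add_sum_erase s.powerset (fun B => fubini ((s \ B).card)) h0
  have hps : ∑ B ∈ s.powerset, fubini ((s \ B).card)
      = ∑ j ∈ Finset.range (m + 1), m.choose j * fubini (m - j) := by
    rw [Finset.powerset_card_biUnion, Finset.sum_biUnion (Finset.pairwise_disjoint_powersetCard s |>.set_pairwise _), hs]
    refine Finset.sum_congr rfl fun j hj => ?_
    have hc : ∀ B ∈ Finset.powersetCard j s, fubini ((s \ B).card) = fubini (m - j) := by
      intro B hB
      obtain ⟨hBs, hBc⟩ := Finset.mem_powersetCard.mp hB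
      rw [Finset.card_sdiff_of_subset hBs, hs, hBc]
    rw [Finset.sum_congr rfl hc, Finset.sum_const, Finset.card_powersetCard, hs, smul_eq_mul]
  have hX : ∑ j ∈ Finset.range m, m.choose (j + 1) * fubini (m - (j + 1)) = fubini m := by
    obtain ⟨mm, rfl⟩ : ∃ mm, m = mm + 1 := ⟨m - 1, by omega⟩
    have hrefl := Finset.sum_range_reflect
      (fun k => (mm + 1).choose ((mm + 1) - k) * fubini k) (mm + 1)
    have e1 : ∑ j ∈ Finset.range (mm + 1), (mm + 1).choose (j + 1) * fubini ((mm + 1) - (j + 1))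
        = ∑ j ∈ Finset.range (mm + 1),
            (mm + 1).choose ((mm + 1) - ((mm + 1) - 1 - j)) * fubini ((mm + 1) - 1 - j) := by
      refine Finset.sum_congr rfl fun j hj => ?_
      have hj' := Finset.mem_range.mp hj
      have e2 : (mm + 1) - ((mm + 1) - 1 - j) = j + 1 := by omega
      have e3 : (mm + 1) - 1 - j = (mm + 1) - (j + 1) := by omega
      rw [e2, e3]
    rw [e1, hrefl]
    have e4 : ∑ k ∈ Finset.range (mm + 1), (mm + 1).choose ((mm + 1) - k) * fubini k
        = ∑ k ∈ Finset.range (mm + 1), (mm + 1).choose k * fubini k := by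
      refine Finset.sum_congr rfl fun k hk => ?_
      rw [Nat.choose_symm (by have := Finset.mem_range.mp hk; omega : k ≤ mm + 1)]
    rw [e4]
    conv_rhs => rw [fubini]
    exact (Fin.sum_univ_eq_sum_range (fun k => (mm + 1).choose k * fubini k) (mm + 1)).symm
  have hrange : ∑ j ∈ Finset.range (m + 1), m.choose j * fubini (m - j)
      = fubini m + fubini m := by
    rw [Finset.sum_range_succ', hX]
    simp [Nat.choose_zero_right]
  simp only [hps, hrange, Finset.sdiff_empty, hs] at hsplit
  omega

lemma OP_bound : ∀ (m : ℕ) (s : Finset (Fin n)), s.card = m →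
    (OPSet n s).Finite ∧ (OPSet n s).ncard ≤ fubini m := by
  intro m
  induction m using Nat.strong_induction_on with
  | _ m ih =>
    intro s hs
    rcases Nat.eq_zero_or_pos m with rfl | hm
    · have hse : s = ∅ := Finset.card_eq_zero.mp hs
      subst hse
      rw [OPSet_zero]
      refine ⟨Set.finite_singleton _, ?_⟩
      rw [Set.ncard_singleton, fubini]
    · classical
      have hsne : s ≠ ∅ := by
        intro e; rw [e, Finset.card_empty] at hs; omega
      have key : OPSet n s ⊆ ⋃ B ∈ s.powerset.erase ∅, (fun l => B :: l) '' OPSet n (s \ B) := by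
        intro l hl
        obtain ⟨hne, hdis, hun⟩ := hl
        cases l with
        | nil => exact absurd hun.symm hsne
        | cons B l' =>
          have hBne : B.Nonempty := hne B List.mem_cons_self
          have hunc : B ∪ l'.foldr (· ∪ ·) ∅ = s := hun
          have hBs : B ⊆ s := by rw [← hunc]; exact Finset.subset_union_left
          have hdj : ∀ b ∈ l', Disjoint B b := (List.pairwise_cons.mp hdis).1
          have hU' : l'.foldr (· ∪ ·) ∅ = s \ B := by
            ext x
            simp only [Finset.mem_sdiff]
            constructor
            · intro hx
              obtain ⟨b, hb, hxb⟩ := mem_foldr_union.mp hx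
              exact ⟨by rw [← hunc]; exact Finset.mem_union_right _ hx,
                fun hxB => (Finset.disjoint_left.mp (hdj b hb)) hxB hxb⟩
            · rintro ⟨hxs, hxB⟩
              rw [← hunc] at hxs
              rcases Finset.mem_union.mp hxs with hh | hh
              · exact absurd hh hxB
              · exact hh
          refine Set.mem_biUnion
            (Finset.mem_erase.mpr
              ⟨Finset.nonempty_iff_ne_empty.mp hBne, Finset.mem_powerset.mpr hBs⟩) ?_
          exact ⟨l', ⟨fun b hb => hne b (List.mem_cons_of_mem _ hb),
            (List.pairwise_cons.mp hdis).2, hU'⟩, rfl⟩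
      have hlt : ∀ B ∈ s.powerset.erase ∅, (s \ B).card < m := by
        intro B hB
        obtain ⟨hBne, hBs⟩ := Finset.mem_erase.mp hB
        have hsub := Finset.mem_powerset.mp hBs
        rw [Finset.card_sdiff_of_subset hsub]
        have h1 : 0 < B.card := Finset.card_pos.mpr (Finset.nonempty_iff_ne_empty.mpr hBne)
        have h2 : B.card ≤ s.card := Finset.card_le_card hsub
        omega
      have hfin : ∀ B ∈ s.powerset.erase ∅, ((fun l => B :: l) '' OPSet n (s \ B)).Finite :=
        fun B hB => ((ih _ (hlt B hB) _ rfl).1.image _)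
      have hufin := Set.Finite.biUnion (s.powerset.erase ∅).finite_toSet hfin
      refine ⟨hufin.subset key, ?_⟩
      refine le_trans (Set.ncard_le_ncard key hufin) ?_
      refine le_trans
        (ncard_biUnion_le _ _ (fun B => fubini ((s \ B).card)) hfin ?_) ?_
      · intro B hB
        rw [Set.ncard_image_of_injOn (List.cons_injective.injOn)]
        exact (ih _ (hlt B hB) _ rfl).2
      · exact le_of_eq (powerset_sum s m hs hm)

def CSet (m : ℕ) : Set (List ℕ) := {l | (∀ x ∈ l, 0 < x) ∧ l.sum = m}

lemma geo_sum : ∀ m : ℕ, 1 ≤ m → ∑ k ∈ Finset.range m, 2 ^ (k - 1) = 2 ^ (m - 1) := by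
  intro m
  induction m with
  | zero => omega
  | succ m ih =>
      intro _
      rcases Nat.eq_zero_or_pos m with rfl | hm
      · simp
      · rw [Finset.sum_range_succ, ih hm, Nat.add_sub_cancel, ← two_mul]
        have hm1 : m - 1 + 1 = m := by omega
        rw [← pow_succ', hm1]

lemma comp_bound : ∀ m : ℕ, (CSet m).Finite ∧ (CSet m).ncard ≤ 2 ^ (m - 1) := by
  intro m
  induction m using Nat.strong_induction_on with
  | _ m ih =>
    rcases Nat.eq_zero_or_pos m with rfl | hm
    · have h0 : CSet 0 = {([] : List ℕ)} := by
        ext l; constructor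
        · rintro ⟨hpos, hsum⟩
          cases l with
          | nil => rfl
          | cons a l =>
              exfalso
              have ha := hpos a List.mem_cons_self
              have : a + l.sum = 0 := by simpa using hsum
              omega
        · rintro rfl; exact ⟨by simp, rfl⟩
      rw [h0]
      exact ⟨Set.finite_singleton _, by rw [Set.ncard_singleton]; norm_num⟩
    · classical
      have key : CSet m ⊆ ⋃ j ∈ Finset.Icc 1 m, (fun l => j :: l) '' CSet (m - j) := by
        intro l hl
        obtain ⟨hpos, hsum⟩ := hl
        cases l with
        | nil => exfalso; rw [List.sum_nil] at hsum; omega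
        | cons a l' =>
          have ha := hpos a List.mem_cons_self
          have hsum' : a + l'.sum = m := by simpa using hsum
          exact Set.mem_biUnion (Finset.mem_Icc.mpr ⟨ha, by omega⟩)
            ⟨l', ⟨fun x hx => hpos x (List.mem_cons_of_mem _ hx), by omega⟩, rfl⟩
      have hlt : ∀ j ∈ Finset.Icc 1 m, m - j < m := by
        intro j hj; have := Finset.mem_Icc.mp hj; omega
      have hfin : ∀ j ∈ Finset.Icc 1 m, ((fun l => j :: l) '' CSet (m - j)).Finite :=
        fun j hj => (ih _ (hlt j hj)).1.image _
      have hufin := Set.Finite.biUnion (Finset.Icc 1 m).finite_toSet hfin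
      refine ⟨hufin.subset key, ?_⟩
      refine le_trans (Set.ncard_le_ncard key hufin) ?_
      refine le_trans (ncard_biUnion_le _ _ (fun j => 2 ^ (m - j - 1)) hfin ?_) ?_
      · intro j hj
        rw [Set.ncard_image_of_injOn (List.cons_injective.injOn)]
        exact le_trans (ih _ (hlt j hj)).2 (by norm_num)
      · have hsum : ∑ j ∈ Finset.Icc 1 m, 2 ^ (m - j - 1) = 2 ^ (m - 1) := by
          rw [← Finset.Ico_add_one_right_eq_Icc, Finset.sum_Ico_eq_sum_range]
          simp only [Nat.succ_sub_one, Nat.add_sub_cancel]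
          have e : ∀ k ∈ Finset.range m, 2 ^ (m - (1 + k) - 1) = 2 ^ ((m - 1 - k) - 1) := by
            intro k hk; have := Finset.mem_range.mp hk; congr 1; omega
          rw [Finset.sum_congr rfl e,
            Finset.sum_range_reflect (fun k => 2 ^ (k - 1)) m, geo_sum m hm]
        exact le_of_eq hsum

end SpecAux


namespace SpecAux

lemma eq_of_flatten_eq {α : Type*} :
    ∀ {L1 L2 : List (List α)}, L1.map List.length = L2.map List.length →
      L1.flatten = L2.flatten → L1 = L2
  | [], [], _, _ => rfl
  | [], _ :: _, h, _ => by simp at h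
  | _ :: _, [], h, _ => by simp at h
  | a :: L1, b :: L2, hl, hf => by
      simp only [List.map_cons, List.cons.injEq] at hl
      simp only [List.flatten_cons] at hf
      obtain ⟨hab, hrest⟩ := List.append_inj hf hl.1
      rw [hab, eq_of_flatten_eq hl.2 hrest]

variable {n : ℕ}

lemma toFinset_foldr (L : List (List (Fin n))) :
    (L.map List.toFinset).foldr (· ∪ ·) ∅ = L.flatten.toFinset := by
  induction L with
  | nil => simp
  | cons a L ih => simp [List.toFinset_append, ih]

lemma map_toFinset_eq (t : Term n) :
    (t.lmFactors.map fun u => u.leaves.toFinset)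
      = (t.lmFactors.map Term.leaves).map List.toFinset := by
  rw [List.map_map]; rfl

lemma inv_mem {t : Term n} (ht : t.IsLinear) :
    (t.lmFactors.map fun u => u.leaves.toFinset) ∈ OPSet n (Finset.univ.erase t.leftVar) := by
  classical
  have hnd : t.leaves.Nodup := ht.nodup_iff.mpr (List.nodup_finRange n)
  have hdec := leaves_decomp t
  rw [hdec] at hnd
  obtain ⟨hlv_nmem, hfl_nd⟩ := List.nodup_cons.mp hnd
  refine ⟨?_, ?_, ?_⟩
  · intro b hb
    obtain ⟨u, hu, rfl⟩ := List.mem_map.mp hb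
    exact (List.toFinset_nonempty_iff _).mpr (leaves_ne_nil u)
  · have hpd : List.Pairwise List.Disjoint (t.lmFactors.map Term.leaves) :=
      (List.nodup_flatten.mp hfl_nd).2
    rw [map_toFinset_eq, List.pairwise_map]
    exact hpd.imp fun hd => List.disjoint_toFinset_iff_disjoint.mpr hd
  · rw [map_toFinset_eq, toFinset_foldr]
    have huniv : t.leaves.toFinset = Finset.univ := by
      rw [List.toFinset_eq_of_perm _ _ ht, List.toFinset_finRange]
    rw [hdec, List.toFinset_cons] at huniv
    have he : (t.lmFactors.map Term.leaves).flatten.toFinset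
        = (insert t.leftVar (t.lmFactors.map Term.leaves).flatten.toFinset).erase t.leftVar :=
      (Finset.erase_insert (by simpa using hlv_nmem)).symm
    rw [he, huniv]

section Assemble
variable {G : Type*} (op : G → G → G)
variable (hyp1 : ∀ x y z : G, op x (op y z) = op x (op z y))
variable (hyp2 : ∀ w x y z : G, op w (op x (op y z)) = op w (op (op x y) z))
include hyp1 hyp2

lemma part2 (n : ℕ) : acSpec op n ≤ n * fubini (n - 1) := by
  classical
  set S := {f : (Fin n → G) → G | ∃ t : Term n, t.IsLinear ∧ f = fun h => t.eval op h} with hS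
  rcases Set.eq_empty_or_nonempty S with he | hSne
  · calc acSpec op n = S.ncard := rfl
      _ = 0 := by rw [he, Set.ncard_empty]
      _ ≤ _ := Nat.zero_le _
  obtain ⟨f0, hf0⟩ := hSne
  obtain ⟨t0, -, -⟩ := hf0
  let inv : Term n → Fin n × List (Finset (Fin n)) :=
    fun t => (t.leftVar, t.lmFactors.map fun u => u.leaves.toFinset)
  let Φ : ((Fin n → G) → G) → Fin n × List (Finset (Fin n)) :=
    fun f => if hf : f ∈ S then inv hf.choose else inv t0
  have hΦ : ∀ f (hf : f ∈ S), ∃ t : Term n, t.IsLinear ∧ f = (fun h => t.eval op h)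
      ∧ Φ f = inv t := by
    intro f hf
    exact ⟨hf.choose, hf.choose_spec.1, hf.choose_spec.2, by simp only [Φ, dif_pos hf]⟩
  have hinj : Set.InjOn Φ S := by
    intro f hf g hg he
    obtain ⟨t1, hl1, hfe, hi1⟩ := hΦ f hf
    obtain ⟨t2, hl2, hge, hi2⟩ := hΦ g hg
    rw [hi1, hi2] at he
    rw [hfe, hge]
    funext h
    exact main_part1 op hyp1 hyp2 t1 t2 hl1 hl2
      (congrArg Prod.fst he) (congrArg Prod.snd he) h
  have hsub : Φ '' S ⊆ ⋃ i ∈ (Finset.univ : Finset (Fin n)),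
      (fun l => ((i : Fin n), l)) '' OPSet n (Finset.univ.erase i) := by
    rintro p ⟨f, hf, rfl⟩
    obtain ⟨t, hl, -, hi⟩ := hΦ f hf
    rw [hi]
    exact Set.mem_biUnion (Finset.mem_univ t.leftVar) ⟨_, inv_mem hl, rfl⟩
  have hcard_erase : ∀ i : Fin n, ((Finset.univ : Finset (Fin n)).erase i).card = n - 1 := by
    intro i
    rw [Finset.card_erase_of_mem (Finset.mem_univ i), Finset.card_univ, Fintype.card_fin]
  have hfinpieces : ∀ i ∈ (Finset.univ : Finset (Fin n)),
      ((fun l => ((i : Fin n), l)) '' OPSet n (Finset.univ.erase i)).Finite :=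
    fun i _ => (OP_bound _ _ rfl).1.image _
  have hufin := Set.Finite.biUnion Finset.univ.finite_toSet hfinpieces
  calc acSpec op n = S.ncard := rfl
    _ = (Φ '' S).ncard := (Set.ncard_image_of_injOn hinj).symm
    _ ≤ _ := Set.ncard_le_ncard hsub hufin
    _ ≤ ∑ _i ∈ (Finset.univ : Finset (Fin n)), fubini (n - 1) := by
        refine ncard_biUnion_le _ _ (fun _ => fubini (n - 1)) hfinpieces ?_
        intro i _
        rw [Set.ncard_image_of_injOn (fun x _ y _ e => congrArg Prod.snd e)]
        exact le_trans (OP_bound _ _ rfl).2 (le_of_eq (congrArg fubini (hcard_erase i)))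
    _ = n * fubini (n - 1) := by
        rw [Finset.sum_const, Finset.card_univ, Fintype.card_fin, smul_eq_mul]

lemma part3 {n : ℕ} (hn : 2 ≤ n) : assocSpec op n ≤ 2 ^ (n - 2) := by
  classical
  set S := {f : (Fin n → G) → G | ∃ t : Term n, t.IsBracketing ∧ f = fun h => t.eval op h}
    with hS
  rcases Set.eq_empty_or_nonempty S with he | hSne
  · calc assocSpec op n = S.ncard := rfl
      _ = 0 := by rw [he, Set.ncard_empty]
      _ ≤ _ := Nat.zero_le _
  let Ψ : ((Fin n → G) → G) → List ℕ :=
    fun f => if hf : f ∈ S then (hf.choose.lmFactors.map fun u => u.leaves.length) else []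
  have hΨ : ∀ f (hf : f ∈ S), ∃ t : Term n, t.IsBracketing ∧ f = (fun h => t.eval op h)
      ∧ Ψ f = t.lmFactors.map fun u => u.leaves.length := by
    intro f hf
    exact ⟨hf.choose, hf.choose_spec.1, hf.choose_spec.2, by simp only [Ψ, dif_pos hf]⟩
  have hfacts : ∀ t : Term n, t.IsBracketing →
      t.leftVar :: (t.lmFactors.map Term.leaves).flatten = List.finRange n := by
    intro t ht; rw [← leaves_decomp t]; exact ht
  have hinj : Set.InjOn Ψ S := by
    intro f hf g hg he
    obtain ⟨t1, hb1, hfe, hi1⟩ := hΨ f hf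
    obtain ⟨t2, hb2, hge, hi2⟩ := hΨ g hg
    rw [hi1, hi2] at he
    have hlen : (t1.lmFactors.map Term.leaves).map List.length
        = (t2.lmFactors.map Term.leaves).map List.length := by
      rw [List.map_map, List.map_map]; exact he
    have hcons := (hfacts t1 hb1).trans (hfacts t2 hb2).symm
    injection hcons with hlv hfl
    have hmapleaves := eq_of_flatten_eq hlen hfl
    have hmap : (t1.lmFactors.map fun u => u.leaves.toFinset)
        = (t2.lmFactors.map fun u => u.leaves.toFinset) := by
      rw [map_toFinset_eq, map_toFinset_eq, hmapleaves]
    rw [hfe, hge]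
    funext h
    refine main_part1 op hyp1 hyp2 t1 t2 ?_ ?_ hlv hmap h
    · show t1.leaves.Perm _
      rw [hb1]
    · show t2.leaves.Perm _
      rw [hb2]
  have hsub : Ψ '' S ⊆ CSet (n - 1) := by
    rintro p ⟨f, hf, rfl⟩
    obtain ⟨t, hb, -, hi⟩ := hΨ f hf
    rw [hi]
    constructor
    · intro x hx
      obtain ⟨u, hu, rfl⟩ := List.mem_map.mp hx
      exact List.length_pos_iff.mpr (leaves_ne_nil u)
    · have hcons := hfacts t hb
      have hflen : (t.lmFactors.map Term.leaves).flatten.length = n - 1 := by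
        have hlen := congrArg List.length hcons
        simp only [List.length_cons, List.length_finRange] at hlen
        omega
      rw [← hflen, List.length_flatten, List.map_map]
      rfl
  calc assocSpec op n = S.ncard := rfl
    _ = (Ψ '' S).ncard := (Set.ncard_image_of_injOn hinj).symm
    _ ≤ (CSet (n - 1)).ncard := Set.ncard_le_ncard hsub (comp_bound (n - 1)).1
    _ ≤ 2 ^ (n - 1 - 1) := (comp_bound (n - 1)).2
    _ = 2 ^ (n - 2) := by congr 1

end Assemble
end SpecAux


/-- For groupoids satisfying `x(yz) ≈ x(zy)` and `w(x(yz)) ≈ w((xy)z)`, full linear terms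
inducing the same rooted ordered set partition induce the same operation; hence
`s^ac_n ≤ n·B'_{n-1}` and `s_n ≤ 2^{n-2}`. -/
theorem spec_bounds_ordered_partition {G : Type*} (op : G → G → G)
    (h1 : ∀ x y z : G, op x (op y z) = op x (op z y))
    (h2 : ∀ w x y z : G, op w (op x (op y z)) = op w (op (op x y) z)) (n : ℕ) :
    (∀ s t : Term n, s.IsLinear → t.IsLinear → s.leftVar = t.leftVar →
      (s.lmFactors.map fun u => u.leaves.toFinset) =
        (t.lmFactors.map fun u => u.leaves.toFinset) →
      ∀ h : Fin n → G, s.eval op h = t.eval op h) ∧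
    (1 ≤ n → acSpec op n ≤ n * fubini (n - 1)) ∧
    (2 ≤ n → assocSpec op n ≤ 2 ^ (n - 2)) := by
  exact ⟨fun s t hs ht hlv hmap h => SpecAux.main_part1 op h1 h2 s t hs ht hlv hmap h,
    fun _ => SpecAux.part2 op h1 h2 n, fun hn => SpecAux.part3 op h1 h2 hn⟩
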